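/- Let S be a finite nonempty set of primes, let k be the product of the elements of S, and let f = (X² − X)/k ∈ ℚ[X]. Then every preperiodic point of f in ℚ̄ lies in ℚ^tp for every p ∈ S, and the set of preperiodic points of f in ℚ̄ is infinite; in particular, the field ⋂_{p∈S} ℚ^tp contains infinitely many preperiodic points of f. -/

import Mathlib

open Polynomial

/-!
Let `p ∣ k`. By Hensel's lemma, for every `y ∈ ℤ_[p]` the equation `x (x - 1) = k y` has one
root `x ≡ 0` and one root `x ≡ 1 (mod p)`, and these two inverse branches of `f` are contractions
of `ℤ_[p]` with ratio `‖k‖ < 1`. Let `g_u` be the composite of the branches along a word `u`. For a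
word `w` of length `n ≥ 1` the contraction `g_w` has a fixed point `x_w`, which is periodic, and
the points `g_u (x_w)` with `u` of length `m` are `2 ^ (m + n)` roots in `ℤ_[p]` of
`f^[m+n] - f^[m]`, pairwise distinct because the residues mod `p` of their iterates spell out `u`
and `w`. This polynomial has degree `2 ^ (m + n)`, so it splits over `ℚ_[p]` with simple roots.
The minimal polynomial of a preperiodic point divides one of these polynomials, and the
separability of `f^[n] - X` gives `2 ^ n` periodic points in `ℚ̄` for every `n`.
-/

theorem Function.finite_range_iterate_iff {α : Type*} {g : α → α} {x : α} :
    (Set.range fun j => g^[j] x).Finite ↔ ∃ m n, n ≠ 0 ∧ g^[m + n] x = g^[m] x := by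
  constructor
  · intro hfin
    obtain ⟨i, j, hij, hne⟩ := Function.not_injective_iff.mp
      fun hinj => Set.infinite_range_of_injective hinj hfin
    rcases hne.lt_or_gt with hlt | hlt
    · exact ⟨i, j - i, by omega, by rwa [Nat.add_sub_cancel' hlt.le, eq_comm]⟩
    · exact ⟨j, i - j, by omega, by rwa [Nat.add_sub_cancel' hlt.le]⟩
  · rintro ⟨m, n, hn, h⟩
    have hper : Function.IsPeriodicPt g n (g^[m] x) := by
      rw [Function.IsPeriodicPt, Function.IsFixedPt, ← Function.iterate_add_apply, add_comm, h]
    refine ((Set.finite_Iio (m + n)).image fun j => g^[j] x).subset ?_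
    rintro _ ⟨j, rfl⟩
    rcases lt_or_ge j m with hj | hj
    · exact ⟨j, Set.mem_Iio.mpr (by omega), rfl⟩
    · refine ⟨(j - m) % n + m, ?_, ?_⟩
      · have := Nat.mod_lt (j - m) (Nat.pos_of_ne_zero hn)
        exact Set.mem_Iio.mpr (by omega)
      · beta_reduce
        rw [Function.iterate_add_apply, hper.iterate_mod_apply, ← Function.iterate_add_apply,
          Nat.sub_add_cancel hj]

namespace Polynomial

theorem aeval_iterate_comp_X {R A : Type*} [CommSemiring R] [CommSemiring A] [Algebra R A]
    (f : R[X]) (j : ℕ) (x : A) : aeval x (f.comp^[j] X) = (fun y => aeval y f)^[j] x := by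
  simp [aeval_def]

theorem natDegree_iterate_comp_X_sub {R : Type*} [CommRing R] [IsDomain R] {f : R[X]}
    (hf : 1 < f.natDegree) (m : ℕ) {n : ℕ} (hn : n ≠ 0) :
    (f.comp^[m + n] X - f.comp^[m] X).natDegree = f.natDegree ^ (m + n) := by
  rw [natDegree_sub_eq_left_of_natDegree_lt] <;>
    simp only [natDegree_iterate_comp, natDegree_X, mul_one]
  exact Nat.pow_lt_pow_right hf (by omega)

theorem splits_and_separable_of_injective {K ι : Type*} [Field K] [Fintype ι] {P : K[X]}
    (hP : P ≠ 0) {z : ι → K} (hz : Function.Injective z) (hroot : ∀ i, P.IsRoot (z i))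
    (hdeg : P.natDegree ≤ Fintype.card ι) : P.Splits ∧ P.Separable := by
  classical
  have hcard : Fintype.card ι ≤ P.roots.toFinset.card := by
    rw [← Finset.card_univ, ← Finset.card_image_of_injective _ hz]
    refine Finset.card_le_card fun x hx => ?_
    obtain ⟨i, -, rfl⟩ := Finset.mem_image.mp hx
    exact Multiset.mem_toFinset.mpr ((mem_roots hP).mpr (hroot i))
  have h₁ := P.roots.toFinset_card_le
  have h₂ := card_roots' P
  have hsplit : P.Splits := splits_iff_card_roots.mpr (by omega)
  exact ⟨hsplit, (nodup_roots_iff_of_splits hP hsplit).mp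
    (Multiset.toFinset_card_eq_card_iff_nodup.mp (by omega))⟩

theorem infinite_setOf_finite_range_iterate {K L : Type*} [Field K] [Field L] [Algebra K L]
    [IsAlgClosed L] {f : K[X]} (hf : 1 < f.natDegree)
    (hsep : ∀ n ≠ 0, (f.comp^[n] X - X).Separable) :
    {α : L | (Set.range fun j => (fun x => aeval x f)^[j] α).Finite}.Infinite := by
  intro hfin
  set N := {α : L | (Set.range fun j => (fun x => aeval x f)^[j] α).Finite}.ncard
  have hperiodic : (f.comp^[N + 1] X - X).rootSet L ⊆
      {α : L | (Set.range fun j => (fun x => aeval x f)^[j] α).Finite} := fun α hα => by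
    rw [mem_rootSet, map_sub, aeval_iterate_comp_X, aeval_X, sub_eq_zero] at hα
    exact Function.finite_range_iterate_iff.mpr ⟨0, N + 1, N.succ_ne_zero, by simpa using hα.2⟩
  have hcard : ((f.comp^[N + 1] X - X).rootSet L).ncard = f.natDegree ^ (N + 1) := by
    rw [← Nat.card_coe_set_eq, Nat.card_eq_fintype_card,
      card_rootSet_eq_natDegree (hsep _ N.succ_ne_zero) (IsAlgClosed.splits _)]
    simpa using natDegree_iterate_comp_X_sub hf 0 N.succ_ne_zero
  have hle := Set.ncard_le_ncard hperiodic hfin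
  rw [hcard] at hle
  exact (Nat.lt_succ_self N).trans (Nat.lt_pow_self hf) |>.not_ge hle

theorem natDegree_C_mul_X_sq_sub_X {K : Type*} [Field K] {a : K} (ha : a ≠ 0) :
    (C a * (X ^ 2 - X)).natDegree = 2 := by
  rw [natDegree_C_mul ha, natDegree_sub_eq_left_of_natDegree_lt] <;> simp

end Polynomial

namespace PadicQuadraticDynamics

variable {p : ℕ} [Fact p.Prime]

noncomputable def quadMap (c : ℤ_[p]) (x : ℚ_[p]) : ℚ_[p] := (c : ℚ_[p])⁻¹ * (x ^ 2 - x)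

variable {c : ℤ_[p]}

theorem exists_mul_sub_one_eq (hc : ‖c‖ < 1) (b : Bool) (y : ℤ_[p]) :
    ∃ x : ℤ_[p], x * (x - 1) = c * y ∧ ‖x - b.toNat‖ < 1 := by
  have hderiv : ‖aeval (b.toNat : ℤ_[p]) (derivative (X ^ 2 - X - C (c * y)))‖ = 1 := by
    cases b <;> norm_num
  have hvalue : ‖aeval (b.toNat : ℤ_[p]) (X ^ 2 - X - C (c * y))‖ = ‖c‖ * ‖y‖ := by
    cases b <;> simp
  obtain ⟨x, hx, hxb, -⟩ :=
    hensels_lemma (F := X ^ 2 - X - C (c * y)) (a := (b.toNat : ℤ_[p]))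
    (by rw [hderiv, one_pow, hvalue]
        exact (mul_le_of_le_one_right (norm_nonneg _) (PadicInt.norm_le_one y)).trans_lt hc)
  have hx' : x ^ 2 - x - c * y = 0 := by simpa using hx
  exact ⟨x, by linear_combination hx', by rwa [hderiv] at hxb⟩

theorem norm_add_sub_one_eq_one {x x' : ℤ_[p]} {b : Bool} (hx : ‖x - b.toNat‖ < 1)
    (hx' : ‖x' - b.toNat‖ < 1) : ‖x + x' - 1‖ = 1 := by
  have hsmall : ‖(x - b.toNat) + (x' - b.toNat)‖ < 1 :=
    (PadicInt.nonarchimedean _ _).trans_lt (max_lt hx hx')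
  have hunit : ‖(2 * b.toNat - 1 : ℤ_[p])‖ = 1 := by cases b <;> norm_num
  rw [show x + x' - 1 = (2 * b.toNat - 1 : ℤ_[p]) + ((x - b.toNat) + (x' - b.toNat)) by ring,
    PadicInt.norm_add_eq_max_of_ne (by rw [hunit]; exact hsmall.ne'), hunit]
  exact max_eq_left hsmall.le

theorem eq_of_norm_sub_toNat_lt_one {x : ℤ_[p]} {b b' : Bool} (h : ‖x - b.toNat‖ < 1)
    (h' : ‖x - b'.toNat‖ < 1) : b = b' := by
  have hdisjoint (z : ℤ_[p]) (h₀ : ‖z‖ < 1) (h₁ : ‖z - 1‖ < 1) : False := by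
    simpa using (PadicInt.nonarchimedean z (-(z - 1))).trans_lt (max_lt h₀ (by rwa [norm_neg]))
  cases b <;> cases b' <;> simp only [Bool.toNat_false, Bool.toNat_true, Nat.cast_zero,
    Nat.cast_one, sub_zero, Bool.false_eq_true, Bool.true_eq_false] at h h' ⊢
  exacts [hdisjoint x h h', hdisjoint x h' h]

noncomputable def branch (hc : ‖c‖ < 1) (b : Bool) (y : ℤ_[p]) : ℤ_[p] :=
  (exists_mul_sub_one_eq hc b y).choose

section Branches

variable (hc : ‖c‖ < 1)

theorem branch_mul_sub_one (b : Bool) (y : ℤ_[p]) :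
    branch hc b y * (branch hc b y - 1) = c * y :=
  (exists_mul_sub_one_eq hc b y).choose_spec.1

theorem norm_branch_sub_lt_one (b : Bool) (y : ℤ_[p]) : ‖branch hc b y - b.toNat‖ < 1 :=
  (exists_mul_sub_one_eq hc b y).choose_spec.2

theorem norm_branch_sub_branch (b : Bool) (y y' : ℤ_[p]) :
    ‖branch hc b y - branch hc b y'‖ = ‖c‖ * ‖y - y'‖ := by
  have hfactor : (branch hc b y - branch hc b y') * (branch hc b y + branch hc b y' - 1) =
      c * (y - y') := by
    linear_combination branch_mul_sub_one hc b y - branch_mul_sub_one hc b y'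
  have := congrArg norm hfactor
  rwa [norm_mul, norm_mul, norm_add_sub_one_eq_one (norm_branch_sub_lt_one hc b y)
    (norm_branch_sub_lt_one hc b y'), mul_one] at this

theorem lipschitzWith_branch (b : Bool) : LipschitzWith ‖c‖₊ (branch hc b) :=
  LipschitzWith.of_dist_le_mul fun y y' => by
    simp only [dist_eq_norm, coe_nnnorm, norm_branch_sub_branch, le_refl]

noncomputable def branchWord : List Bool → ℤ_[p] → ℤ_[p]
  | [] => id
  | b :: u => branch hc b ∘ branchWord u

theorem lipschitzWith_branchWord (u : List Bool) :
    LipschitzWith (‖c‖₊ ^ u.length) (branchWord hc u) := by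
  induction u with
  | nil => simpa [branchWord] using LipschitzWith.id
  | cons b u ih => simpa [branchWord, pow_succ'] using (lipschitzWith_branch hc b).comp ih

theorem exists_branchWord_eq_self {u : List Bool} (hu : u ≠ []) :
    ∃ x, branchWord hc u x = x :=
  ⟨_, ContractingWith.fixedPoint_isFixedPt
    ⟨pow_lt_one₀ (by positivity) (by exact_mod_cast hc) (mt List.length_eq_zero_iff.mp hu),
      lipschitzWith_branchWord hc u⟩⟩

theorem quadMap_branch (hc0 : c ≠ 0) (b : Bool) (y : ℤ_[p]) :
    quadMap c (branch hc b y) = y := by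
  have hc0' : (c : ℚ_[p]) ≠ 0 := PadicInt.coe_ne_zero.mpr hc0
  have h := congrArg ((↑) : ℤ_[p] → ℚ_[p]) (branch_mul_sub_one hc b y)
  push_cast at h
  rw [quadMap, inv_mul_eq_iff_eq_mul₀ hc0', ← h]
  ring

theorem iterate_quadMap_branchWord (hc0 : c ≠ 0) (u : List Bool) (y : ℤ_[p]) :
    (quadMap c)^[u.length] (branchWord hc u y) = y := by
  induction u with
  | nil => rfl
  | cons b u ih =>
    rw [List.length_cons, Function.iterate_succ_apply, branchWord, Function.comp_apply,
      quadMap_branch hc hc0, ih]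

theorem branchWord_inj (hc0 : c ≠ 0) {u u' : List Bool} (hlen : u.length = u'.length)
    {y y' : ℤ_[p]} (h : branchWord hc u y = branchWord hc u' y') : u = u' ∧ y = y' := by
  induction u generalizing u' with
  | nil =>
    obtain rfl := List.length_eq_zero_iff.mp hlen.symm
    exact ⟨rfl, h⟩
  | cons b u ih =>
    obtain _ | ⟨b', u'⟩ := u'
    · simp at hlen
    simp only [branchWord, Function.comp_apply] at h
    have hb : b = b' := eq_of_norm_sub_toNat_lt_one (norm_branch_sub_lt_one hc b _)
      (h ▸ norm_branch_sub_lt_one hc b' _)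
    subst hb
    have h' := congrArg (fun x : ℤ_[p] => quadMap c x) h
    simp only [quadMap_branch hc hc0] at h'
    obtain ⟨rfl, rfl⟩ := ih (by simpa using hlen) (Subtype.coe_injective h')
    exact ⟨rfl, rfl⟩

end Branches

theorem exists_injective_iterate_add_eq (hc : ‖c‖ < 1) (hc0 : c ≠ 0) (m : ℕ) {n : ℕ}
    (hn : n ≠ 0) :
    ∃ z : List.Vector Bool m × List.Vector Bool n → ℚ_[p], Function.Injective z ∧
      ∀ t, (quadMap c)^[m + n] (z t) = (quadMap c)^[m] (z t) := by
  have hperiodic (w : List.Vector Bool n) : ∃ x, branchWord hc w.1 x = x :=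
    exists_branchWord_eq_self hc fun hw => hn (w.2 ▸ hw ▸ rfl)
  choose x hx using hperiodic
  refine ⟨fun t => branchWord hc t.1.1 (x t.2), ?_, ?_⟩
  · rintro ⟨u, w⟩ ⟨u', w'⟩ h
    obtain ⟨hu, hxw⟩ := branchWord_inj hc hc0 (u.2.trans u'.2.symm) (Subtype.coe_injective h)
    rw [← hx w, ← hx w'] at hxw
    exact Prod.ext (Subtype.ext hu)
      (Subtype.ext (branchWord_inj hc hc0 (w.2.trans w'.2.symm) hxw).1)
  · rintro ⟨⟨u, rfl⟩, w⟩
    have hw : (quadMap c)^[n] (x w) = x w := by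
      conv_lhs => rw [← hx w]
      simpa [w.2] using iterate_quadMap_branchWord hc hc0 w.1 (x w)
    beta_reduce
    rw [add_comm, Function.iterate_add_apply, iterate_quadMap_branchWord hc hc0, hw]

end PadicQuadraticDynamics

open PadicQuadraticDynamics in
theorem splits_map_padic_and_separable_iterate_comp_X_sub {p k : ℕ} [Fact p.Prime]
    (hk0 : k ≠ 0) (hpk : p ∣ k) {f : ℚ[X]} (hf : f = C (k : ℚ)⁻¹ * (X ^ 2 - X)) (m : ℕ) {n : ℕ}
    (hn : n ≠ 0) :
    ((f.comp^[m + n] X - f.comp^[m] X).map (algebraMap ℚ ℚ_[p])).Splits ∧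
      (f.comp^[m + n] X - f.comp^[m] X).Separable := by
  have hdeg : (f.comp^[m + n] X - f.comp^[m] X).natDegree = 2 ^ (m + n) := by
    have hf2 : f.natDegree = 2 := hf ▸ natDegree_C_mul_X_sq_sub_X (by simpa using hk0)
    rw [natDegree_iterate_comp_X_sub (by omega) m hn, hf2]
  have hG0 : f.comp^[m + n] X - f.comp^[m] X ≠ 0 :=
    ne_zero_of_natDegree_gt (n := 0) (hdeg ▸ Nat.two_pow_pos _)
  have hquad : (fun x : ℚ_[p] => aeval x f) = quadMap (k : ℤ_[p]) := by
    funext x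
    simp [hf, quadMap]
  obtain ⟨z, hz, hroot⟩ := exists_injective_iterate_add_eq
    (c := (k : ℤ_[p])) ((PadicInt.norm_lt_one_iff_dvd _).mpr (Nat.cast_dvd_cast hpk))
    (by exact_mod_cast hk0) m hn
  obtain ⟨hsplit, hsep⟩ := splits_and_separable_of_injective
    (P := (f.comp^[m + n] X - f.comp^[m] X).map (algebraMap ℚ ℚ_[p]))
    (Polynomial.map_ne_zero hG0) hz
    (fun t => by simp [eval_map_algebraMap, aeval_iterate_comp_X, hquad, hroot])
    (by rw [natDegree_map, hdeg]; simp [pow_add])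
  exact ⟨hsplit, (separable_map _).mp hsep⟩

/-- Example 3.6: let `S` be a finite nonempty set of primes, `k` their product, and
`f = (X² − X)/k ∈ ℚ[X]`.  Every preperiodic point of `f` in `ℚ̄` is totally `p`-adic for every
`p ∈ S` (its minimal polynomial over `ℚ` splits over `ℚ_p`), and `f` has infinitely many
preperiodic points in `ℚ̄`; in particular `⋂_{p ∈ S} ℚ^tp` contains infinitely many preperiodic
points of `f`. -/
theorem stmt_13 (S : Finset ℕ) (hSprime : ∀ q ∈ S, q.Prime) (hSne : S.Nonempty)
    (k : ℕ) (hk : k = ∏ q ∈ S, q)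
    (f : Polynomial ℚ) (hf : f = C ((k : ℚ))⁻¹ * (X ^ 2 - X)) :
    (∀ α : AlgebraicClosure ℚ,
      (Set.range fun n => (fun x : AlgebraicClosure ℚ => aeval x f)^[n] α).Finite →
      ∀ (p : ℕ) [Fact p.Prime], p ∈ S →
        Splits ((minpoly ℚ α).map (algebraMap ℚ ℚ_[p]))) ∧
    {α : AlgebraicClosure ℚ |
      (Set.range fun n => (fun x : AlgebraicClosure ℚ => aeval x f)^[n] α).Finite}.Infinite := by
  have hk0 : k ≠ 0 := hk ▸ Finset.prod_ne_zero_iff.mpr fun q hq => (hSprime q hq).ne_zero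
  have hpk (p : ℕ) (hp : p ∈ S) : p ∣ k := hk ▸ Finset.dvd_prod_of_mem _ hp
  refine ⟨fun α hα p _ hpS => ?_, ?_⟩
  · obtain ⟨m, n, hn, hα⟩ := Function.finite_range_iterate_iff.mp hα
    have hroot : aeval α (f.comp^[m + n] X - f.comp^[m] X) = 0 := by
      rw [map_sub, aeval_iterate_comp_X, aeval_iterate_comp_X, hα, sub_self]
    obtain ⟨hsplit, hsep⟩ :=
      splits_map_padic_and_separable_iterate_comp_X_sub hk0 (hpk p hpS) hf m hn
    exact hsplit.of_dvd (Polynomial.map_ne_zero hsep.ne_zero)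
      (Polynomial.map_dvd (algebraMap ℚ ℚ_[p]) (minpoly.dvd ℚ α hroot))
  · obtain ⟨p, hpS⟩ := hSne
    have : Fact p.Prime := ⟨hSprime p hpS⟩
    have hf2 : f.natDegree = 2 := hf ▸ natDegree_C_mul_X_sq_sub_X (by simpa using hk0)
    refine infinite_setOf_finite_range_iterate (hf2 ▸ one_lt_two) fun n hn => ?_
    simpa using (splits_map_padic_and_separable_iterate_comp_X_sub hk0 (hpk p hpS) hf 0 hn).2
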